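/- arXiv:2004.09498 — 2 statements merged into one kernel-verified Lean document; each statement's English description precedes it below -/
import Mathlib

section
/- Let A ∈ ℝ^{n×n}, B ∈ ℝ^{n×m}, C ∈ ℝ^{p×n}, K ∈ ℝ^{m×n}, H ∈ ℝ^{n×p}, N ≥ 2, D = [d_ij] ∈ ℝ^{N×N}, and let D̃ ∈ ℝ^{(N−1)×(N−1)} be defined by d̃_ij = d_ij − d_Nj. Suppose sequences x_i, η_i, x̂_i : ℕ → ℝⁿ (i = 1,…,N) satisfy x_i(k+1) = A x_i(k) − BK η_i(k), η_i(k+1) = A η_i(k) − BK η_i(k) + A x̂_i(k) − A ζ̂_i(k), x̂_i(k+1) = A x̂_i(k) − BK ζ̂_i(k) + H(ζ_i(k) − C x̂_i(k)), where ζ_i(k) = Σ_{j=1}^N d_ij C(x_i(k) − x_j(k)) and ζ̂_i(k) = Σ_{j=1}^N d_ij (η_i(k) − η_j(k)). Define the differenced stacked vectors x̄ = (x_1 − x_N, …, x_{N−1} − x_N), η̄ = (η_1 − η_N, …, η_{N−1} − η_N), x̂̄ = (x̂_1 − x̂_N, …, x̂_{N−1} − x̂_N), and set ē(k) = x̄(k)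 − η̄(k) and ẽ(k) = (x̄(k) − x̂̄(k)) − (D̃ ⊗ I_n) x̄(k). Then for all k ∈ ℕ: x̄(k+1) = (I_{N−1} ⊗ (A − BK)) x̄(k) + (I_{N−1} ⊗ BK) ē(k), ē(k+1) = (D̃ ⊗ A) ē(k) + (I_{N−1} ⊗ A) ẽ(k), and ẽ(k+1) = (I_{N−1} ⊗ (A − HC)) ẽ(k). -/
/-!
Differencing against agent `N` is a linear map `w ↦ (w_i - w_N)_{i < N}`. It turns an
agentwise matrix `P` into `I ⊗ P`, and, because all rows of `D` have the same sum, it turns the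
coupling `w ↦ (Σ_j d_ij w_j)_i` into `D̃ ⊗ I`. In the agentwise variables `e_i = x_i - η_i` and
`φ_i = x_i - x̂_i - Σ_j d_ij x_j` the closed loop reads `e_i⁺ = A (Σ_j d_ij e_j) + A φ_i` and
`φ_i⁺ = (A - HC) φ_i`; differencing gives the three identities, with `ē` and `ẽ` the differences
of `e` and `φ`.
-/

open Kronecker

namespace Matrix

variable {R : Type*} [CommRing R]

theorem kronecker_mulVec_apply {l m ι κ : Type*} [Fintype m] [Fintype ι]
    (M : Matrix l m R) (P : Matrix κ ι R) (v : m × ι → R) (i : l) (a : κ) :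
    ((M ⊗ₖ P) *ᵥ v) (i, a) = (P *ᵥ ∑ j, M i j • fun b => v (j, b)) a := by
  simp only [mulVec, dotProduct, Fintype.sum_prod_type, kroneckerMap_apply, Finset.sum_apply,
    Pi.smul_apply, smul_eq_mul, Finset.mul_sum]
  rw [Finset.sum_comm]
  exact Finset.sum_congr rfl fun b _ => Finset.sum_congr rfl fun j _ => by ring

theorem one_kronecker_mulVec_apply {m ι κ : Type*} [Fintype m] [DecidableEq m] [Fintype ι]
    (P : Matrix κ ι R) (v : m × ι → R) (i : m) (a : κ) :
    (((1 : Matrix m m R) ⊗ₖ P) *ᵥ v) (i, a) = (P *ᵥ fun b => v (i, b)) a := by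
  simp [kronecker_mulVec_apply, one_apply, ite_smul]

end Matrix

open Matrix

section Differencing

variable {R : Type*} [CommRing R] {ν : ℕ}

def reducedMatrix (D : Matrix (Fin (ν + 1)) (Fin (ν + 1)) R) : Matrix (Fin ν) (Fin ν) R :=
  Matrix.of fun i j => D i.castSucc j.castSucc - D (Fin.last ν) j.castSucc

theorem sum_reducedMatrix_smul_sub_last {V : Type*} [AddCommGroup V] [Module R V]
    {D : Matrix (Fin (ν + 1)) (Fin (ν + 1)) R} {c : R} (hD : ∀ i, ∑ j, D i j = c)
    (w : Fin (ν + 1) → V) (i : Fin ν) :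
    ∑ j, reducedMatrix D i j • (w j.castSucc - w (Fin.last ν))
      = ∑ j, D i.castSucc j • w j - ∑ j, D (Fin.last ν) j • w j := by
  have hcast : ∀ r, ∑ j : Fin ν, D r j.castSucc = c - D r (Fin.last ν) := fun r => by
    rw [← hD r, Fin.sum_univ_castSucc, add_sub_cancel_right]
  simp only [reducedMatrix, of_apply, smul_sub, Finset.sum_sub_distrib, sub_smul,
    ← Finset.sum_smul, hcast, Fin.sum_univ_castSucc (fun j => D _ j • w j)]
  abel

def stackDiff {ι : Type*} : (Fin (ν + 1) → ι → R) →ₗ[R] (Fin ν × ι → R) where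
  toFun w q := w q.1.castSucc q.2 - w (Fin.last ν) q.2
  map_add' _ _ := funext fun _ => add_sub_add_comm ..
  map_smul' _ _ := funext fun _ => (mul_sub ..).symm

@[simp]
theorem stackDiff_apply {ι : Type*} (w : Fin (ν + 1) → ι → R) (q : Fin ν × ι) :
    stackDiff w q = w q.1.castSucc q.2 - w (Fin.last ν) q.2 := rfl

variable {ι κ : Type*} [Fintype ι]

theorem stackDiff_mulVec (P : Matrix κ ι R) (w : Fin (ν + 1) → ι → R) :
    stackDiff (fun i => P *ᵥ w i) = ((1 : Matrix (Fin ν) (Fin ν) R) ⊗ₖ P) *ᵥ stackDiff w := by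
  ext ⟨i, a⟩
  rw [one_kronecker_mulVec_apply]
  simp only [stackDiff_apply, ← Pi.sub_apply, ← mulVec_sub]

theorem stackDiff_mulVec_sum_smul {D : Matrix (Fin (ν + 1)) (Fin (ν + 1)) R} {c : R}
    (hD : ∀ i, ∑ j, D i j = c) (P : Matrix κ ι R) (w : Fin (ν + 1) → ι → R) :
    stackDiff (fun i => P *ᵥ ∑ j, D i j • w j) = (reducedMatrix D ⊗ₖ P) *ᵥ stackDiff w := by
  ext ⟨i, a⟩
  rw [kronecker_mulVec_apply]
  simp only [stackDiff_apply, ← Pi.sub_apply, ← mulVec_sub]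
  rw [← sum_reducedMatrix_smul_sub_last hD]

theorem sum_smul_sub_eq_sub_sum_smul {V : Type*} [AddCommGroup V] [Module R V] {d : ι → R}
    (hd : ∑ j, d j = 1) (v : V) (w : ι → V) :
    ∑ j, d j • (v - w j) = v - ∑ j, d j • w j := by
  simp only [smul_sub, Finset.sum_sub_distrib, ← Finset.sum_smul, hd, one_smul]

section ErrorDynamics

variable {n p : Type*} [Fintype n] [Fintype p] (A F : Matrix n n R) (H : Matrix n p R)
  (C : Matrix p n R) {d : ι → R}

theorem tracking_error_step (hd : ∑ j, d j = 1) {x η : ι → n → R} {xh x' η' : n → R} (i : ι)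
    (hx : x' = A *ᵥ x i - F *ᵥ η i)
    (hη : η' = A *ᵥ η i - F *ᵥ η i + A *ᵥ xh - A *ᵥ ∑ j, d j • (η i - η j)) :
    x' - η' = A *ᵥ ∑ j, d j • (x j - η j) + A *ᵥ (x i - xh - ∑ j, d j • x j) := by
  rw [hx, hη, sum_smul_sub_eq_sub_sum_smul hd]
  simp only [smul_sub, Finset.sum_sub_distrib, mulVec_sub]
  abel

theorem observer_error_step (hd : ∑ j, d j = 1) {x η x' : ι → n → R} {xh xh' : n → R} (i : ι)
    (hx : ∀ j, x' j = A *ᵥ x j - F *ᵥ η j)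
    (hxh : xh' = A *ᵥ xh - F *ᵥ ∑ j, d j • (η i - η j)
      + H *ᵥ (∑ j, d j • C *ᵥ (x i - x j) - C *ᵥ xh)) :
    x' i - xh' - ∑ j, d j • x' j = (A - H * C) *ᵥ (x i - xh - ∑ j, d j • x j) := by
  simp only [hx, hxh, ← mulVec_smul, ← mulVec_sum, sum_smul_sub_eq_sub_sum_smul hd]
  simp only [smul_sub, Finset.sum_sub_distrib, mulVec_sub, sub_mulVec, mulVec_mulVec]
  simp only [← mulVec_smul, ← mulVec_sum]
  abel

end ErrorDynamics

end Differencing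

theorem partial_state_closed_loop_identities_general
    (n m p ν : ℕ)
    (A : Matrix (Fin n) (Fin n) ℝ) (B : Matrix (Fin n) (Fin m) ℝ)
    (C : Matrix (Fin p) (Fin n) ℝ)
    (K : Matrix (Fin m) (Fin n) ℝ) (H : Matrix (Fin n) (Fin p) ℝ)
    (D : Matrix (Fin (ν + 1)) (Fin (ν + 1)) ℝ)
    (hDrow : ∀ i, ∑ j, D i j = 1)
    (Dt : Matrix (Fin ν) (Fin ν) ℝ)
    (hDt : ∀ i j : Fin ν, Dt i j = D i.castSucc j.castSucc - D (Fin.last ν) j.castSucc)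
    (x η xh : Fin (ν + 1) → ℕ → Fin n → ℝ)
    (hx : ∀ i k, x i (k + 1) = A.mulVec (x i k) - (B * K).mulVec (η i k))
    (hη : ∀ i k, η i (k + 1) =
        A.mulVec (η i k) - (B * K).mulVec (η i k)
          + A.mulVec (xh i k)
          - A.mulVec (∑ j, D i j • (η i k - η j k)))
    (hxh : ∀ i k, xh i (k + 1) =
        A.mulVec (xh i k)
          - (B * K).mulVec (∑ j, D i j • (η i k - η j k))
          + H.mulVec ((∑ j, D i j • C.mulVec (x i k - x j k))
              - C.mulVec (xh i k)))
    (xb ηb xhb eb et : ℕ → Fin ν × Fin n → ℝ)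
    (hxb : ∀ k q, xb k q = x q.1.castSucc k q.2 - x (Fin.last ν) k q.2)
    (hηb : ∀ k q, ηb k q = η q.1.castSucc k q.2 - η (Fin.last ν) k q.2)
    (hxhb : ∀ k q, xhb k q = xh q.1.castSucc k q.2 - xh (Fin.last ν) k q.2)
    (heb : ∀ k, eb k = xb k - ηb k)
    (het : ∀ k, et k = (xb k - xhb k)
        - (Dt ⊗ₖ (1 : Matrix (Fin n) (Fin n) ℝ)).mulVec (xb k)) :
    (∀ k, xb (k + 1)
        = ((1 : Matrix (Fin ν) (Fin ν) ℝ) ⊗ₖ (A - B * K)).mulVec (xb k)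
          + ((1 : Matrix (Fin ν) (Fin ν) ℝ) ⊗ₖ (B * K)).mulVec (eb k)) ∧
    (∀ k, eb (k + 1)
        = (Dt ⊗ₖ A).mulVec (eb k)
          + ((1 : Matrix (Fin ν) (Fin ν) ℝ) ⊗ₖ A).mulVec (et k)) ∧
    (∀ k, et (k + 1)
        = ((1 : Matrix (Fin ν) (Fin ν) ℝ) ⊗ₖ (A - H * C)).mulVec (et k)) := by
  obtain rfl : Dt = reducedMatrix D := Matrix.ext hDt
  set e : ℕ → Fin (ν + 1) → Fin n → ℝ := fun k i => x i k - η i k with he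
  set φ : ℕ → Fin (ν + 1) → Fin n → ℝ := fun k i => x i k - xh i k - ∑ j, D i j • x j k
  have xb_eq : ∀ k, xb k = stackDiff (x · k) := fun k => funext (hxb k)
  have ηb_eq : ∀ k, ηb k = stackDiff (η · k) := fun k => funext (hηb k)
  have xhb_eq : ∀ k, xhb k = stackDiff (xh · k) := fun k => funext (hxhb k)
  have eb_eq : ∀ k, eb k = stackDiff (e k) := fun k => by
    rw [heb, xb_eq, ηb_eq, ← map_sub]; rfl
  have et_eq : ∀ k, et k = stackDiff (φ k) := fun k => by
    rw [het, xb_eq, xhb_eq, ← stackDiff_mulVec_sum_smul hDrow]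
    simp only [one_mulVec]
    rw [← map_sub, ← map_sub]
    rfl
  have x_succ : ∀ k, (x · (k + 1)) = (fun i => (A - B * K) *ᵥ x i k) + fun i => (B * K) *ᵥ e k i :=
    fun k => funext fun i => by
      simp only [hx, he, Pi.add_apply, sub_mulVec, mulVec_sub]
      abel
  have e_succ : ∀ k, e (k + 1) = (fun i => A *ᵥ ∑ j, D i j • e k j) + fun i => A *ᵥ φ k i :=
    fun k => funext fun i => tracking_error_step A (B * K) (hDrow i) i (hx i k) (hη i k)
  have φ_succ : ∀ k, φ (k + 1) = fun i => (A - H * C) *ᵥ φ k i := fun k => funext fun i =>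
    observer_error_step A (B * K) H C (hDrow i) i (hx · k) (hxh i k)
  refine ⟨fun k => ?_, fun k => ?_, fun k => ?_⟩
  · rw [xb_eq, xb_eq, eb_eq, x_succ, map_add, stackDiff_mulVec, stackDiff_mulVec]
  · rw [eb_eq, eb_eq, et_eq, e_succ, map_add, stackDiff_mulVec_sum_smul hDrow, stackDiff_mulVec]
  · rw [et_eq, et_eq, φ_succ, stackDiff_mulVec]

theorem partial_state_closed_loop_identities
    (n m p ν : ℕ) (hν : 1 ≤ ν)
    (A : Matrix (Fin n) (Fin n) ℝ) (B : Matrix (Fin n) (Fin m) ℝ)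
    (C : Matrix (Fin p) (Fin n) ℝ)
    (K : Matrix (Fin m) (Fin n) ℝ) (H : Matrix (Fin n) (Fin p) ℝ)
    (D : Matrix (Fin (ν + 1)) (Fin (ν + 1)) ℝ)
    (hDrow : ∀ i, ∑ j, D i j = 1)
    (Dt : Matrix (Fin ν) (Fin ν) ℝ)
    (hDt : ∀ i j : Fin ν, Dt i j = D i.castSucc j.castSucc - D (Fin.last ν) j.castSucc)
    (x η xh : Fin (ν + 1) → ℕ → Fin n → ℝ)
    (hx : ∀ i k, x i (k + 1) = A.mulVec (x i k) - (B * K).mulVec (η i k))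
    (hη : ∀ i k, η i (k + 1) =
        A.mulVec (η i k) - (B * K).mulVec (η i k)
          + A.mulVec (xh i k)
          - A.mulVec (∑ j, D i j • (η i k - η j k)))
    (hxh : ∀ i k, xh i (k + 1) =
        A.mulVec (xh i k)
          - (B * K).mulVec (∑ j, D i j • (η i k - η j k))
          + H.mulVec ((∑ j, D i j • C.mulVec (x i k - x j k))
              - C.mulVec (xh i k)))
    (xb ηb xhb eb et : ℕ → Fin ν × Fin n → ℝ)
    (hxb : ∀ k q, xb k q = x q.1.castSucc k q.2 - x (Fin.last ν) k q.2)
    (hηb : ∀ k q, ηb k q = η q.1.castSucc k q.2 - η (Fin.last ν) k q.2)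
    (hxhb : ∀ k q, xhb k q = xh q.1.castSucc k q.2 - xh (Fin.last ν) k q.2)
    (heb : ∀ k, eb k = xb k - ηb k)
    (het : ∀ k, et k = (xb k - xhb k)
        - (Dt ⊗ₖ (1 : Matrix (Fin n) (Fin n) ℝ)).mulVec (xb k)) :
    (∀ k, xb (k + 1)
        = ((1 : Matrix (Fin ν) (Fin ν) ℝ) ⊗ₖ (A - B * K)).mulVec (xb k)
          + ((1 : Matrix (Fin ν) (Fin ν) ℝ) ⊗ₖ (B * K)).mulVec (eb k)) ∧
    (∀ k, eb (k + 1)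
        = (Dt ⊗ₖ A).mulVec (eb k)
          + ((1 : Matrix (Fin ν) (Fin ν) ℝ) ⊗ₖ A).mulVec (et k)) ∧
    (∀ k, et (k + 1)
        = ((1 : Matrix (Fin ν) (Fin ν) ℝ) ⊗ₖ (A - H * C)).mulVec (et k)) :=
  partial_state_closed_loop_identities_general n m p ν A B C K H D hDrow Dt hDt x η xh hx hη hxh xb
    ηb xhb eb et hxb hηb hxhb heb het
end

section
/- (Theorem 4, reduced form: scalable regulated output synchronization of homogenized agents.) Let A ∈ ℝ^{n×n} have all its eigenvalues in the closed unit disc of ℂ, let B ∈ ℝ^{n×m} and C ∈ ℝ^{p×n}, and suppose K ∈ ℝ^{m×n} and H ∈ ℝ^{n×p} are such that A − BK and A − HC are Schur stable. Let N ≥ 1 and let D̄ = [d̄_ij] ∈ ℝ^{N×N} be a matrix all of whose eigenvalues have modulus strictly less than 1. Let the exosystem be x_r(k+1) = A x_r(k), y_r(k) = C x_r(k). For each i, let d_i : ℕ → ℝ^m be generated by ω_i(k+1) = A_{i,s} ω_i(k), d_i(k) = C_{i,s} ω_i(k) with A_{i,s} Schur stable. Consider sequences x_i, η_i, x̂_i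 : ℕ → ℝⁿ satisfying x_i(k+1) = A x_i(k) + B(v_i(k) + d_i(k)), y_i(k) = C x_i(k), with protocol η_i(k+1) = A η_i(k) + B v_i(k) + A x̂_i(k) − A ζ̌_i(k), x̂_i(k+1) = A x̂_i(k) + H(ζ̄_i(k) − C x̂_i(k)) − BK ζ̌_i(k), v_i(k) = −K η_i(k), where ζ̄_i(k) = (y_i(k) − y_r(k)) − Σ_{j=1}^N d̄_ij (y_j(k) − y_r(k)) and ζ̌_i(k) = η_i(k) − Σ_{j=1}^N d̄_ij η_j(k). Then for all initial conditions x_i(0), η_i(0), x̂_i(0), ω_i(0), x_r(0), lim_{k→∞} (x_i(k) − x_r(k)) = 0, and hence lim_{k→∞} (y_i(k) − y_r(k)) = 0, for all i ∈ {1,…,N}. -/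
/-!
Write `e i = x i - xr`. Three error signals obey cascaded linear recurrences with forcing terms
that tend to zero: the observer error `δ i = (e i - ∑ j, Db i j • e j) - xh i` is driven through
`A - H C` by the disturbances; `ψ i = e i - η i` evolves under the Kronecker operator `Db ⊗ A`,
of spectral radius `ρ(Db) ρ(A) < 1`, driven by `δ` and the disturbances; and `η` is driven through
`A - B K` by `ψ` and `δ`. By Gelfand's formula the powers of each of these operators have summable
norms, and then variation of constants together with Tannery's theorem shows that every trajectory
of such a forced system tends to zero. Hence `e i = ψ i + η i → 0`.
-/

open Filter Topology Finset Matrix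
open scoped NNReal ENNReal

attribute [local instance] Matrix.linftyOpNormedAddCommGroup Matrix.linftyOpNormedRing
  Matrix.linftyOpNormedAlgebra

section ForcedRecurrence

variable {R E : Type*} [Semiring R] [NormedAddCommGroup E] [Module R E]

theorem Module.End.eq_pow_apply_add_sum_of_recurrence (f : Module.End R E) {z u : ℕ → E}
    (hz : ∀ k, z (k + 1) = f (z k) + u k) (k : ℕ) :
    z k = (f ^ k) (z 0) + ∑ i ∈ range k, (f ^ i) (u (k - 1 - i)) := by
  induction k with
  | zero => simp
  | succ k ih =>
    rw [hz, ih, map_add, map_sum, sum_range_succ', pow_succ', add_assoc]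
    simp only [pow_succ', Module.End.mul_apply]
    congr 2
    refine sum_congr rfl fun i _ => ?_
    congr 3
    omega

theorem Module.End.tendsto_sum_pow_apply_of_tendsto_zero [CompleteSpace E] (f : Module.End R E)
    {b : ℕ → ℝ} (hb : Summable b) (hfb : ∀ k v, ‖(f ^ k) v‖ ≤ b k * ‖v‖) {u : ℕ → E}
    (hu : Tendsto u atTop (𝓝 0)) :
    Tendsto (fun k => ∑ i ∈ range k, (f ^ i) (u (k - 1 - i))) atTop (𝓝 0) := by
  obtain ⟨M, hM⟩ := hu.norm.bddAbove_range
  -- Tannery's theorem, the `i`-th term being dominated by `|b i| * M`.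
  have hdom := tendsto_tsum_of_dominated_convergence (𝓕 := atTop) (g := fun _ => (0 : E))
    (f := fun k i => if i < k then (f ^ i) (u (k - 1 - i)) else 0) (hb.abs.mul_right M)
    (fun i => ?_) (Eventually.of_forall fun k i => ?_)
  · simp only [tsum_zero] at hdom
    refine hdom.congr fun k => ?_
    rw [tsum_eq_sum (s := range k) fun i hi => if_neg (by simpa using hi)]
    exact sum_congr rfl fun i hi => if_pos (mem_range.mp hi)
  · have hlim : Tendsto (fun k => (f ^ i) (u (k - (1 + i)))) atTop (𝓝 0) :=
      squeeze_zero_norm (fun k => hfb i _) (by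
        simpa using ((hu.comp (tendsto_sub_atTop_nat (1 + i))).norm.const_mul (b i)))
    refine hlim.congr' ?_
    filter_upwards [eventually_gt_atTop i] with k hk
    simp [hk, Nat.sub_sub]
  · have hM0 : 0 ≤ M := (norm_nonneg _).trans (hM ⟨0, rfl⟩)
    split_ifs
    · exact (hfb i _).trans
        (mul_le_mul (le_abs_self _) (hM ⟨_, rfl⟩) (norm_nonneg _) (abs_nonneg _))
    · simpa using mul_nonneg (abs_nonneg (b i)) hM0

theorem Module.End.tendsto_zero_of_recurrence [CompleteSpace E] (f : Module.End R E)
    {b : ℕ → ℝ} (hb : Summable b) (hfb : ∀ k v, ‖(f ^ k) v‖ ≤ b k * ‖v‖) {z u : ℕ → E}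
    (hz : ∀ k, z (k + 1) = f (z k) + u k) (hu : Tendsto u atTop (𝓝 0)) :
    Tendsto z atTop (𝓝 0) := by
  have hfree : Tendsto (fun k => (f ^ k) (z 0)) atTop (𝓝 0) :=
    squeeze_zero_norm (fun k => hfb k _) (by simpa using hb.tendsto_atTop_zero.mul_const ‖z 0‖)
  simpa using (hfree.add (f.tendsto_sum_pow_apply_of_tendsto_zero hb hfb hu)).congr
    fun k => (f.eq_pow_apply_add_sum_of_recurrence hz k).symm

end ForcedRecurrence

theorem Filter.Tendsto.const_matrix_mulVec {α R m n : Type*} [NonUnitalNonAssocSemiring R]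
    [TopologicalSpace R] [ContinuousAdd R] [ContinuousMul R] [Fintype n] {l : Filter α}
    (P : Matrix m n R) {w : α → n → R} {v : n → R} (hw : Tendsto w l (𝓝 v)) :
    Tendsto (fun a => P *ᵥ w a) l (𝓝 (P *ᵥ v)) :=
  ((continuous_const.matrix_mulVec continuous_id).tendsto v).comp hw

section Spectral

variable {ι κ : Type*} [Fintype ι] [Fintype κ]

def Matrix.IsSchurStable (M : Matrix ι ι ℝ) : Prop :=
  ∀ μ : ℂ, (∃ x : ι → ℂ, x ≠ 0 ∧ (M.map Complex.ofReal) *ᵥ x = μ • x) → ‖μ‖ < 1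

variable [DecidableEq ι] [DecidableEq κ]

theorem Matrix.exists_mulVec_eq_smul_of_mem_spectrum {K : Type*} [Field K] {M : Matrix ι ι K}
    {μ : K} (h : μ ∈ spectrum K M) : ∃ x, x ≠ 0 ∧ M *ᵥ x = μ • x := by
  rw [← Matrix.spectrum_toLin', ← Module.End.hasEigenvalue_iff_mem_spectrum] at h
  obtain ⟨x, hx⟩ := h.exists_hasEigenvector
  exact ⟨x, hx.2, by simpa using hx.apply_eq_smul⟩

theorem Matrix.spectralRadius_map_ofReal_le_one {M : Matrix ι ι ℝ}
    (hM : ∀ μ : ℂ, (∃ x : ι → ℂ, x ≠ 0 ∧ (M.map Complex.ofReal) *ᵥ x = μ • x) → ‖μ‖ ≤ 1) :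
    spectralRadius ℂ (M.map Complex.ofReal) ≤ 1 :=
  iSup₂_le fun μ hμ => by
    exact_mod_cast hM μ (Matrix.exists_mulVec_eq_smul_of_mem_spectrum hμ)

theorem Matrix.IsSchurStable.spectralRadius_lt_one {M : Matrix ι ι ℝ} (hM : M.IsSchurStable) :
    spectralRadius ℂ (M.map Complex.ofReal) < 1 := by
  cases isEmpty_or_nonempty ι
  · simp [spectrum.SpectralRadius.of_subsingleton]
  · exact spectrum.spectralRadius_lt_of_forall_lt _ fun μ hμ => by
      exact_mod_cast hM μ (Matrix.exists_mulVec_eq_smul_of_mem_spectrum hμ)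

theorem spectrum.eventually_norm_pow_le_of_spectralRadius_lt {A : Type*} [NormedRing A]
    [NormedAlgebra ℂ A] [CompleteSpace A] {a : A} {r : ℝ≥0} (h : spectralRadius ℂ a < r) :
    ∀ᶠ k in atTop, ‖a ^ k‖ ≤ r ^ k := by
  filter_upwards [(pow_nnnorm_pow_one_div_tendsto_nhds_spectralRadius a).eventually_lt_const h,
    eventually_ne_atTop 0] with k hk hk0
  have hkpos : (0 : ℝ) < k := by positivity
  have := ENNReal.rpow_lt_rpow hk hkpos
  rw [← ENNReal.rpow_mul, one_div_mul_cancel hkpos.ne', ENNReal.rpow_one, ENNReal.rpow_natCast,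
    ← ENNReal.coe_pow, ENNReal.coe_lt_coe] at this
  exact_mod_cast this.le

theorem Matrix.linfty_opNorm_map_ofReal (M : Matrix ι ι ℝ) : ‖M.map Complex.ofReal‖ = ‖M‖ := by
  simp [Matrix.linfty_opNorm_def]

theorem Matrix.eventually_norm_pow_le {M : Matrix ι ι ℝ} {r : ℝ≥0}
    (h : spectralRadius ℂ (M.map Complex.ofReal) < r) : ∀ᶠ k in atTop, ‖M ^ k‖ ≤ r ^ k := by
  filter_upwards [spectrum.eventually_norm_pow_le_of_spectralRadius_lt h] with k hk
  rw [← Matrix.linfty_opNorm_map_ofReal]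
  exact (congrArg norm (map_pow Complex.ofRealHom.mapMatrix M k)).trans_le hk

theorem Matrix.IsSchurStable.summable_norm_pow {M : Matrix ι ι ℝ} (hM : M.IsSchurStable) :
    Summable fun k => ‖M ^ k‖ := by
  obtain ⟨r, hMr, hr1⟩ := ENNReal.lt_iff_exists_nnreal_btwn.mp hM.spectralRadius_lt_one
  exact (summable_geometric_of_lt_one r.2 (by exact_mod_cast hr1)).of_norm_bounded_eventually_nat
    (by simpa using Matrix.eventually_norm_pow_le hMr)

theorem Matrix.summable_norm_pow_mul_norm_pow {D : Matrix ι ι ℝ} {M : Matrix κ κ ℝ} {s t : ℝ≥0}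
    (hD : spectralRadius ℂ (D.map Complex.ofReal) < s)
    (hM : spectralRadius ℂ (M.map Complex.ofReal) < t) (hst : s * t < 1) :
    Summable fun k => ‖D ^ k‖ * ‖M ^ k‖ := by
  refine (summable_geometric_of_lt_one (r := s * t) (by positivity)
    (by exact_mod_cast hst)).of_norm_bounded_eventually_nat ?_
  filter_upwards [Matrix.eventually_norm_pow_le hD, Matrix.eventually_norm_pow_le hM] with k hDk hMk
  rw [Real.norm_eq_abs, abs_of_nonneg (by positivity), mul_pow]
  exact mul_le_mul hDk hMk (norm_nonneg _) (by positivity)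

end Spectral

section Kronecker

variable {ι κ : Type*} [Fintype ι] [Fintype κ]

def Matrix.kronEnd (D : Matrix ι ι ℝ) (M : Matrix κ κ ℝ) : Module.End ℝ (ι → κ → ℝ) :=
  LinearMap.pi fun i => ∑ j, D i j • (mulVecLin M ∘ₗ LinearMap.proj j)

@[simp]
theorem Matrix.kronEnd_apply (D : Matrix ι ι ℝ) (M : Matrix κ κ ℝ) (v : ι → κ → ℝ) (i : ι) :
    kronEnd D M v i = ∑ j, D i j • M *ᵥ v j := by
  simp [kronEnd]

theorem Matrix.kronEnd_mul (D D' : Matrix ι ι ℝ) (M M' : Matrix κ κ ℝ) :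
    kronEnd D M * kronEnd D' M' = kronEnd (D * D') (M * M') := by
  refine LinearMap.ext fun v => funext fun i => ?_
  simp only [Module.End.mul_apply, kronEnd_apply, mulVec_sum, mulVec_smul, smul_sum, smul_smul,
    mulVec_mulVec, mul_apply, sum_smul]
  exact sum_comm

theorem Matrix.kronEnd_pow [DecidableEq ι] [DecidableEq κ] (D : Matrix ι ι ℝ) (M : Matrix κ κ ℝ)
    (k : ℕ) : kronEnd D M ^ k = kronEnd (D ^ k) (M ^ k) := by
  induction k with
  | zero => exact LinearMap.ext fun v => funext fun i => by simp [one_apply, ite_smul]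
  | succ k ih => rw [pow_succ, ih, kronEnd_mul, ← pow_succ, ← pow_succ]

theorem Matrix.norm_kronEnd_apply_le (D : Matrix ι ι ℝ) (M : Matrix κ κ ℝ) (v : ι → κ → ℝ) :
    ‖kronEnd D M v‖ ≤ ‖D‖ * ‖M‖ * ‖v‖ := by
  refine pi_norm_le_iff_of_nonneg (by positivity) |>.mpr fun i => ?_
  have hrow : ∑ j, ‖D i j‖ ≤ ‖D‖ := by
    rw [linfty_opNorm_def]
    refine le_of_eq_of_le ?_
      (NNReal.coe_le_coe.mpr (Finset.le_sup (f := fun i => ∑ j, ‖D i j‖₊) (mem_univ i)))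
    simp
  calc ‖kronEnd D M v i‖ ≤ ∑ j, ‖D i j‖ * (‖M‖ * ‖v‖) := by
        rw [kronEnd_apply]
        refine norm_sum_le_of_le _ fun j _ => ?_
        rw [norm_smul]
        gcongr
        exact (linfty_opNorm_mulVec M (v j)).trans (by gcongr; exact norm_le_pi_norm v j)
    _ = (∑ j, ‖D i j‖) * ‖M‖ * ‖v‖ := by rw [← sum_mul, mul_assoc]
    _ ≤ ‖D‖ * ‖M‖ * ‖v‖ := by gcongr

end Kronecker

section StableRecurrence

variable {ι κ : Type*} [Fintype ι] [DecidableEq ι] [Fintype κ] [DecidableEq κ]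

theorem Matrix.IsSchurStable.tendsto_zero_of_recurrence {M : Matrix ι ι ℝ} (hM : M.IsSchurStable)
    {z u : ℕ → ι → ℝ} (hz : ∀ k, z (k + 1) = M *ᵥ z k + u k) (hu : Tendsto u atTop (𝓝 0)) :
    Tendsto z atTop (𝓝 0) :=
  Module.End.tendsto_zero_of_recurrence (toLin' M) hM.summable_norm_pow
    (fun k v => by rw [← toLin'_pow, toLin'_apply]; exact linfty_opNorm_mulVec _ _)
    (by simpa using hz) hu

theorem Matrix.IsSchurStable.tendsto_zero_of_kronEnd_recurrence {D : Matrix ι ι ℝ}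
    {M : Matrix κ κ ℝ} (hD : D.IsSchurStable) (hM : spectralRadius ℂ (M.map Complex.ofReal) ≤ 1)
    {z u : ℕ → ι → κ → ℝ} (hz : ∀ k, z (k + 1) = kronEnd D M (z k) + u k)
    (hu : Tendsto u atTop (𝓝 0)) : Tendsto z atTop (𝓝 0) := by
  -- `ρ(D) < s < r < 1` and `ρ(M) ≤ 1 < r / s`, so `‖D ^ k‖ * ‖M ^ k‖` decays like `r ^ k`.
  obtain ⟨s, hDs, hs1⟩ := ENNReal.lt_iff_exists_nnreal_btwn.mp hD.spectralRadius_lt_one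
  obtain ⟨r, hsr, hr1⟩ := ENNReal.lt_iff_exists_nnreal_btwn.mp hs1
  have hs0 : 0 < s := ENNReal.coe_pos.mp (hDs.trans_le' bot_le)
  have hMr : spectralRadius ℂ (M.map Complex.ofReal) < (r / s : ℝ≥0) :=
    hM.trans_lt (ENNReal.one_lt_coe_iff.mpr ((one_lt_div hs0).mpr (by exact_mod_cast hsr)))
  refine Module.End.tendsto_zero_of_recurrence (kronEnd D M)
    (summable_norm_pow_mul_norm_pow hDs hMr ?_) (fun k v => ?_) hz hu
  · rw [mul_div_cancel₀ _ hs0.ne']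
    exact_mod_cast hr1
  · rw [kronEnd_pow]
    exact norm_kronEnd_apply_le _ _ _

end StableRecurrence

section ClosedLoop

variable {ι n m p : Type*} [Fintype ι] [Fintype n] [Fintype m] [Fintype p]

structure IsClosedLoop (A : Matrix n n ℝ) (B : Matrix n m ℝ) (C : Matrix p n ℝ)
    (K : Matrix m n ℝ) (H : Matrix n p ℝ) (Db : Matrix ι ι ℝ) (xr : ℕ → n → ℝ)
    (d : ι → ℕ → m → ℝ) (x η xh : ι → ℕ → n → ℝ) : Prop where
  exosystem : ∀ k, xr (k + 1) = A *ᵥ xr k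
  agent : ∀ i k, x i (k + 1) = A *ᵥ x i k + B *ᵥ (-(K *ᵥ η i k) + d i k)
  protocol : ∀ i k, η i (k + 1) =
    A *ᵥ η i k + B *ᵥ (-(K *ᵥ η i k)) + A *ᵥ xh i k - A *ᵥ (η i k - ∑ j, Db i j • η j k)
  observer : ∀ i k, xh i (k + 1) =
    A *ᵥ xh i k + H *ᵥ ((C *ᵥ x i k - C *ᵥ xr k - ∑ j, Db i j • (C *ᵥ x j k - C *ᵥ xr k))
      - C *ᵥ xh i k) - (B * K) *ᵥ (η i k - ∑ j, Db i j • η j k)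

def relativeEstimateError (Db : Matrix ι ι ℝ) (xr : ℕ → n → ℝ) (x xh : ι → ℕ → n → ℝ) (i : ι)
    (k : ℕ) : n → ℝ :=
  (x i k - xr k) - ∑ j, Db i j • (x j k - xr k) - xh i k

variable {A : Matrix n n ℝ} {B : Matrix n m ℝ} {C : Matrix p n ℝ} {K : Matrix m n ℝ}
  {H : Matrix n p ℝ} {Db : Matrix ι ι ℝ} {xr : ℕ → n → ℝ} {d : ι → ℕ → m → ℝ}
  {x η xh : ι → ℕ → n → ℝ}

theorem IsClosedLoop.relativeEstimateError_succ (h : IsClosedLoop A B C K H Db xr d x η xh)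
    (i : ι) (k : ℕ) :
    relativeEstimateError Db xr x xh i (k + 1) =
      (A - H * C) *ᵥ relativeEstimateError Db xr x xh i k
        + (B *ᵥ d i k - ∑ j, Db i j • B *ᵥ d j k) := by
  simp only [relativeEstimateError, h.agent, h.observer, h.exosystem, sub_mulVec, mulVec_add,
    mulVec_sub, mulVec_neg, mulVec_smul, mulVec_sum, ← mulVec_mulVec, smul_add, smul_sub,
    smul_neg, sum_add_distrib, sum_sub_distrib, sum_neg_distrib]
  abel

theorem IsClosedLoop.trackingError_sub_protocol_succ (h : IsClosedLoop A B C K H Db xr d x η xh)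
    (i : ι) (k : ℕ) :
    x i (k + 1) - xr (k + 1) - η i (k + 1) = ∑ j, Db i j • A *ᵥ (x j k - xr k - η j k)
      + (B *ᵥ d i k + A *ᵥ relativeEstimateError Db xr x xh i k) := by
  simp only [relativeEstimateError, h.agent, h.protocol, h.exosystem, mulVec_add,
    mulVec_sub, mulVec_neg, mulVec_smul, mulVec_sum, smul_sub, sum_sub_distrib]
  abel

theorem IsClosedLoop.protocol_succ (h : IsClosedLoop A B C K H Db xr d x η xh) (i : ι) (k : ℕ) :
    η i (k + 1) = (A - B * K) *ᵥ η i k + A *ᵥ ((x i k - xr k - η i k)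
      - ∑ j, Db i j • (x j k - xr k - η j k) - relativeEstimateError Db xr x xh i k) := by
  simp only [relativeEstimateError, h.protocol, sub_mulVec, mulVec_sub, ← mulVec_mulVec,
    mulVec_neg, smul_sub, sum_sub_distrib]
  abel

theorem IsClosedLoop.tendsto_trackingError [DecidableEq ι] [DecidableEq n]
    (h : IsClosedLoop A B C K H Db xr d x η xh)
    (hA : spectralRadius ℂ (A.map Complex.ofReal) ≤ 1) (hABK : (A - B * K).IsSchurStable)
    (hAHC : (A - H * C).IsSchurStable) (hDb : Db.IsSchurStable)
    (hd : ∀ i, Tendsto (d i) atTop (𝓝 0)) (i : ι) :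
    Tendsto (fun k => x i k - xr k) atTop (𝓝 0) := by
  have hmix : ∀ {w : ι → ℕ → n → ℝ}, (∀ j, Tendsto (w j) atTop (𝓝 0)) →
      ∀ i, Tendsto (fun k => ∑ j, Db i j • w j k) atTop (𝓝 0) := fun hw i => by
    simpa using tendsto_finsetSum univ fun j _ => (hw j).const_smul (Db i j)
  have hBd : ∀ i, Tendsto (fun k => B *ᵥ d i k) atTop (𝓝 0) := fun i => by
    simpa using (hd i).const_matrix_mulVec B
  have hδ : ∀ i, Tendsto (relativeEstimateError Db xr x xh i) atTop (𝓝 0) := fun i =>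
    hAHC.tendsto_zero_of_recurrence (h.relativeEstimateError_succ i)
      (by simpa using (hBd i).sub (hmix hBd i))
  have hψ : ∀ i, Tendsto (fun k => x i k - xr k - η i k) atTop (𝓝 0) := by
    refine tendsto_pi_nhds.mp (hDb.tendsto_zero_of_kronEnd_recurrence hA
      (u := fun k i => B *ᵥ d i k + A *ᵥ relativeEstimateError Db xr x xh i k)
      (fun k => funext fun i => by simp [h.trackingError_sub_protocol_succ]) ?_)
    exact tendsto_pi_nhds.mpr fun i => by simpa using (hBd i).add ((hδ i).const_matrix_mulVec A)
  have hη : Tendsto (η i) atTop (𝓝 0) :=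
    hABK.tendsto_zero_of_recurrence (h.protocol_succ i)
      (by simpa using (((hψ i).sub (hmix hψ i)).sub (hδ i)).const_matrix_mulVec A)
  simpa using (hψ i).add hη

end ClosedLoop

theorem regulated_output_synchronization_homogenized_general
    (n m p : ℕ)
    (A : Matrix (Fin n) (Fin n) ℝ) (B : Matrix (Fin n) (Fin m) ℝ)
    (C : Matrix (Fin p) (Fin n) ℝ)
    (K : Matrix (Fin m) (Fin n) ℝ) (H : Matrix (Fin n) (Fin p) ℝ)
    (hA : ∀ μ : ℂ, (∃ x : Fin n → ℂ, x ≠ 0 ∧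
        (A.map Complex.ofReal).mulVec x = μ • x) → ‖μ‖ ≤ 1)
    (hABK : ∀ μ : ℂ, (∃ x : Fin n → ℂ, x ≠ 0 ∧
        ((A - B * K).map Complex.ofReal).mulVec x = μ • x) → ‖μ‖ < 1)
    (hAHC : ∀ μ : ℂ, (∃ x : Fin n → ℂ, x ≠ 0 ∧
        ((A - H * C).map Complex.ofReal).mulVec x = μ • x) → ‖μ‖ < 1)
    (N : ℕ)
    (Db : Matrix (Fin N) (Fin N) ℝ)
    (hDb : ∀ μ : ℂ, (∃ x : Fin N → ℂ, x ≠ 0 ∧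
        (Db.map Complex.ofReal).mulVec x = μ • x) → ‖μ‖ < 1)
    -- exosystem
    (xr : ℕ → Fin n → ℝ)
    (hxr : ∀ k, xr (k + 1) = A.mulVec (xr k))
    -- disturbance generators
    (s : Fin N → ℕ)
    (As : ∀ i : Fin N, Matrix (Fin (s i)) (Fin (s i)) ℝ)
    (Cs : ∀ i : Fin N, Matrix (Fin m) (Fin (s i)) ℝ)
    (hAs : ∀ i : Fin N, ∀ μ : ℂ, (∃ x : Fin (s i) → ℂ, x ≠ 0 ∧
        ((As i).map Complex.ofReal).mulVec x = μ • x) → ‖μ‖ < 1)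
    (ω : (i : Fin N) → ℕ → Fin (s i) → ℝ)
    (hω : ∀ i k, ω i (k + 1) = (As i).mulVec (ω i k))
    (d : Fin N → ℕ → Fin m → ℝ)
    (hd : ∀ i k, d i k = (Cs i).mulVec (ω i k))
    -- closed-loop dynamics
    (x η xh : Fin N → ℕ → Fin n → ℝ)
    (hx : ∀ i k, x i (k + 1) =
        A.mulVec (x i k) + B.mulVec (-(K.mulVec (η i k)) + d i k))
    (hη : ∀ i k, η i (k + 1) =
        A.mulVec (η i k) + B.mulVec (-(K.mulVec (η i k)))
          + A.mulVec (xh i k)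
          - A.mulVec (η i k - ∑ j, Db i j • η j k))
    (hxh : ∀ i k, xh i (k + 1) =
        A.mulVec (xh i k)
          + H.mulVec ((C.mulVec (x i k) - C.mulVec (xr k)
              - ∑ j, Db i j • (C.mulVec (x j k) - C.mulVec (xr k)))
              - C.mulVec (xh i k))
          - (B * K).mulVec (η i k - ∑ j, Db i j • η j k)) :
    (∀ i, Filter.Tendsto (fun k => x i k - xr k) Filter.atTop (nhds 0)) ∧
    (∀ i, Filter.Tendsto (fun k => C.mulVec (x i k) - C.mulVec (xr k))
        Filter.atTop (nhds 0)) := by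
  have hloop : IsClosedLoop A B C K H Db xr d x η xh := ⟨hxr, hx, hη, hxh⟩
  have hd0 : ∀ i, Tendsto (d i) atTop (𝓝 0) := fun i => by
    have hω0 : Tendsto (ω i) atTop (𝓝 0) := IsSchurStable.tendsto_zero_of_recurrence (hAs i)
      (u := 0) (by simpa using hω i) tendsto_const_nhds
    simpa [funext (hd i)] using hω0.const_matrix_mulVec (Cs i)
  have he := hloop.tendsto_trackingError (spectralRadius_map_ofReal_le_one hA) hABK hAHC hDb hd0
  exact ⟨he, fun i => by simpa [mulVec_sub] using (he i).const_matrix_mulVec C⟩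

theorem regulated_output_synchronization_homogenized
    (n m p : ℕ)
    (A : Matrix (Fin n) (Fin n) ℝ) (B : Matrix (Fin n) (Fin m) ℝ)
    (C : Matrix (Fin p) (Fin n) ℝ)
    (K : Matrix (Fin m) (Fin n) ℝ) (H : Matrix (Fin n) (Fin p) ℝ)
    (hA : ∀ μ : ℂ, (∃ x : Fin n → ℂ, x ≠ 0 ∧
        (A.map Complex.ofReal).mulVec x = μ • x) → ‖μ‖ ≤ 1)
    (hABK : ∀ μ : ℂ, (∃ x : Fin n → ℂ, x ≠ 0 ∧
        ((A - B * K).map Complex.ofReal).mulVec x = μ • x) → ‖μ‖ < 1)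
    (hAHC : ∀ μ : ℂ, (∃ x : Fin n → ℂ, x ≠ 0 ∧
        ((A - H * C).map Complex.ofReal).mulVec x = μ • x) → ‖μ‖ < 1)
    (N : ℕ) (hN : 1 ≤ N)
    (Db : Matrix (Fin N) (Fin N) ℝ)
    (hDb : ∀ μ : ℂ, (∃ x : Fin N → ℂ, x ≠ 0 ∧
        (Db.map Complex.ofReal).mulVec x = μ • x) → ‖μ‖ < 1)
    -- exosystem
    (xr : ℕ → Fin n → ℝ)
    (hxr : ∀ k, xr (k + 1) = A.mulVec (xr k))
    -- disturbance generators
    (s : Fin N → ℕ)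
    (As : ∀ i : Fin N, Matrix (Fin (s i)) (Fin (s i)) ℝ)
    (Cs : ∀ i : Fin N, Matrix (Fin m) (Fin (s i)) ℝ)
    (hAs : ∀ i : Fin N, ∀ μ : ℂ, (∃ x : Fin (s i) → ℂ, x ≠ 0 ∧
        ((As i).map Complex.ofReal).mulVec x = μ • x) → ‖μ‖ < 1)
    (ω : (i : Fin N) → ℕ → Fin (s i) → ℝ)
    (hω : ∀ i k, ω i (k + 1) = (As i).mulVec (ω i k))
    (d : Fin N → ℕ → Fin m → ℝ)
    (hd : ∀ i k, d i k = (Cs i).mulVec (ω i k))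
    -- closed-loop dynamics
    (x η xh : Fin N → ℕ → Fin n → ℝ)
    (hx : ∀ i k, x i (k + 1) =
        A.mulVec (x i k) + B.mulVec (-(K.mulVec (η i k)) + d i k))
    (hη : ∀ i k, η i (k + 1) =
        A.mulVec (η i k) + B.mulVec (-(K.mulVec (η i k)))
          + A.mulVec (xh i k)
          - A.mulVec (η i k - ∑ j, Db i j • η j k))
    (hxh : ∀ i k, xh i (k + 1) =
        A.mulVec (xh i k)
          + H.mulVec ((C.mulVec (x i k) - C.mulVec (xr k)
              - ∑ j, Db i j • (C.mulVec (x j k) - C.mulVec (xr k)))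
              - C.mulVec (xh i k))
          - (B * K).mulVec (η i k - ∑ j, Db i j • η j k)) :
    (∀ i, Filter.Tendsto (fun k => x i k - xr k) Filter.atTop (nhds 0)) ∧
    (∀ i, Filter.Tendsto (fun k => C.mulVec (x i k) - C.mulVec (xr k))
        Filter.atTop (nhds 0)) :=
  regulated_output_synchronization_homogenized_general n m p A B C K H hA hABK hAHC N Db hDb xr hxr
    s As Cs hAs ω hω d hd x η xh hx hη hxh
end
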